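/- In a finite chordal graph G that is not a complete graph, there exist two non-adjacent special simplicial vertices, where a simplicial vertex v is special if the set S_v = (N(v) ∪ {v}) ∩ N(V \ (N(v) ∪ {v})) is a minimal separator of G and is inclusion-maximal among all minimal separators of G. -/

import Mathlib

open SimpleGraph

variable {V : Type*}

/-- `S` separates `u` and `w` in `G`: every walk from `u` to `w` meets `S`. -/
def Separates (G : SimpleGraph V) (S : Set V) (u w : V) : Prop :=
  ∀ p : G.Walk u w, ∃ x ∈ p.support, x ∈ S

/-- `S` is a minimal `{u,w}`-separator. -/
def IsMinUWSeparator (G : SimpleGraph V) (S : Set V) (u w : V) : Prop :=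
  u ≠ w ∧ ¬ G.Adj u w ∧ u ∉ S ∧ w ∉ S ∧ Separates G S u w ∧
    ∀ S' ⊂ S, ¬ Separates G S' u w

/-- `S` is a minimal separator of `G`. -/
def IsMinSeparator (G : SimpleGraph V) (S : Set V) : Prop :=
  ∃ u w : V, IsMinUWSeparator G S u w

/-- A vertex is simplicial if its neighborhood is a clique. -/
def IsSimplicial (G : SimpleGraph V) (v : V) : Prop :=
  G.IsClique (G.neighborSet v)

/-- A maximal clique (as a vertex set). -/
def IsMaxClique (G : SimpleGraph V) (s : Set V) : Prop :=
  G.IsClique s ∧ ∀ t : Set V, G.IsClique t → s ⊆ t → s = t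

/-- A graph is chordal if it has no induced cycle of length at least 4. -/
def Chordal (G : SimpleGraph V) : Prop :=
  ∀ n : ℕ, 4 ≤ n → IsEmpty (SimpleGraph.cycleGraph n ↪g G)

/-- The type of maximal cliques of `G`. -/
abbrev MaxCliques (G : SimpleGraph V) := {s : Set V // IsMaxClique G s}

/-- `T` is a clique tree of `G`: a tree on the maximal cliques such that for each vertex
the cliques containing it induce a connected subgraph. -/
def IsCliqueTree (G : SimpleGraph V) (T : SimpleGraph (MaxCliques G)) : Prop :=
  T.IsTree ∧ ∀ v : V, (T.induce {Q : MaxCliques G | v ∈ Q.1}).Connected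

/-- The set `X` induces a path in `T` (assuming `T` is a tree: connected with max degree 2). -/
def InducesPath {α : Type*} (T : SimpleGraph α) (X : Set α) : Prop :=
  (T.induce X).Connected ∧ ∀ x : X, ((T.induce X).neighborSet x).ncard ≤ 2

/-- `T` is a clique path tree of `G`. -/
def IsCliquePathTree (G : SimpleGraph V) (T : SimpleGraph (MaxCliques G)) : Prop :=
  T.IsTree ∧ ∀ v : V, InducesPath T {Q : MaxCliques G | v ∈ Q.1}

/-- `G` is a path graph: the empty graph, or a graph admitting a clique path tree. -/
def IsPathGraph (G : SimpleGraph V) : Prop :=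
  IsEmpty V ∨ ∃ T : SimpleGraph (MaxCliques G), IsCliquePathTree G T

/-- `G` is an interval graph: intersection graph of closed real intervals. -/
def IsIntervalGraph (G : SimpleGraph V) : Prop :=
  ∃ f : V → Set ℝ, (∀ v, ∃ a b : ℝ, a ≤ b ∧ f v = Set.Icc a b) ∧
    ∀ u v : V, u ≠ v → (G.Adj u v ↔ (f u ∩ f v).Nonempty)

/-- `a` is a middle of `b, c`: every walk from `b` to `c` meets `N(a)`. -/
def IsMiddle (G : SimpleGraph V) (a b c : V) : Prop :=
  ∀ p : G.Walk b c, ∃ x ∈ p.support, G.Adj a x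

/-- `a, b, c` form an asteroidal triple. -/
def AsteroidalTriple (G : SimpleGraph V) (a b c : V) : Prop :=
  a ≠ b ∧ a ≠ c ∧ b ≠ c ∧ ¬ G.Adj a b ∧ ¬ G.Adj a c ∧ ¬ G.Adj b c ∧
  (∃ p : G.Walk b c, ∀ x ∈ p.support, ¬ G.Adj a x) ∧
  (∃ p : G.Walk a c, ∀ x ∈ p.support, ¬ G.Adj b x) ∧
  (∃ p : G.Walk a b, ∀ x ∈ p.support, ¬ G.Adj c x)

/-- The closed neighborhood clique `Q_v` of a simplicial vertex. -/
def Qv (G : SimpleGraph V) (v : V) : Set V := insert v (G.neighborSet v)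

/-- `S_v`: the vertices of `Q_v` having a neighbor outside `Q_v`. -/
def Sv (G : SimpleGraph V) (v : V) : Set V :=
  {x | x ∈ Qv G v ∧ ∃ y, y ∉ Qv G v ∧ G.Adj x y}

/-- A simplicial vertex is special if `S_v` is an inclusion-maximal minimal separator. -/
def IsSpecial (G : SimpleGraph V) (v : V) : Prop :=
  IsSimplicial G v ∧ IsMinSeparator G (Sv G v) ∧
    ∀ S : Set V, IsMinSeparator G S → Sv G v ⊆ S → S = Sv G v

/-- Connected components of `G ∖ S` containing a vertex complete to `S`. -/
def CompleteComponents (G : SimpleGraph V) (S : Set V) :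
    Set ((G.induce (Sᶜ : Set V)).ConnectedComponent) :=
  {C | ∃ x : (Sᶜ : Set V), (G.induce (Sᶜ : Set V)).connectedComponentMk x = C ∧
        S ⊆ G.neighborSet x.1}

/-- The wheel graph: an `n`-cycle plus a universal vertex (`none`). -/
def wheelGraph (n : ℕ) : SimpleGraph (Option (Fin n)) :=
  SimpleGraph.fromRel (fun a b =>
    (∃ i j : Fin n, a = some i ∧ b = some j ∧ (SimpleGraph.cycleGraph n).Adj i j) ∨
    (a = none ∧ b ≠ none))

/-- `y` lies on the tree-path between `x` and `z` in `T`. -/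
def OnTreePath {α : Type*} (T : SimpleGraph α) (x y z : α) : Prop :=
  ∃ p : T.Walk x z, p.IsPath ∧ y ∈ p.support


/-!
Minimal separators of a chordal graph are cliques. Let `S` be an inclusion-maximal minimal
separator and `C` one of its (at least two) full components. Then `C` contains a special vertex
`v` with `Q_v ⊆ C ∪ S`: if `C ∪ S` is a clique, every `v ∈ C` has `Q_v = C ∪ S` and `S_v = S`.
Otherwise some minimal separator meets `C`, and one that is inclusion-maximal among these is an
inclusion-maximal minimal separator with a full component strictly inside `C`, so induction on
`C` applies. The special vertices found in two different full components of `S` are distinct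
and non-adjacent, since `Q_v ⊆ C ∪ S`.
-/

section Components

variable {G : SimpleGraph V} {X S T : Set V} {a b c q x y u w : V}

/-- The component of `a` in `G - X`; empty when `a ∈ X`. -/
def componentAvoiding (G : SimpleGraph V) (X : Set V) (a : V) : Set V :=
  {b | ∃ p : G.Walk a b, ∀ z ∈ p.support, z ∉ X}

def IsFullComponent (G : SimpleGraph V) (S : Set V) (x : V) : Prop :=
  x ∉ S ∧ ∀ s ∈ S, ∃ y ∈ componentAvoiding G S x, G.Adj s y

lemma mem_componentAvoiding_self (ha : a ∉ X) : a ∈ componentAvoiding G X a :=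
  ⟨.nil, by simpa using ha⟩

lemma notMem_of_mem_componentAvoiding (hb : b ∈ componentAvoiding G X a) : b ∉ X := by
  obtain ⟨p, hp⟩ := hb
  exact hp b p.end_mem_support

lemma mem_componentAvoiding_symm (hb : b ∈ componentAvoiding G X a) :
    a ∈ componentAvoiding G X b := by
  obtain ⟨p, hp⟩ := hb
  exact ⟨p.reverse, by simpa using hp⟩

lemma mem_componentAvoiding_trans (hb : b ∈ componentAvoiding G X a)
    (hc : c ∈ componentAvoiding G X b) : c ∈ componentAvoiding G X a := by
  obtain ⟨p, hp⟩ := hb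
  obtain ⟨p', hp'⟩ := hc
  refine ⟨p.append p', fun z hz => ?_⟩
  rcases Walk.mem_support_append_iff _ _ |>.1 hz with hz | hz
  exacts [hp z hz, hp' z hz]

lemma mem_componentAvoiding_of_adj (hq : q ∈ componentAvoiding G X a) (hqy : G.Adj q y)
    (hy : y ∉ X) : y ∈ componentAvoiding G X a :=
  mem_componentAvoiding_trans hq ⟨hqy.toWalk, by simp [notMem_of_mem_componentAvoiding hq, hy]⟩

lemma mem_componentAvoiding_or_mem_of_adj (hq : q ∈ componentAvoiding G X a)
    (hqy : G.Adj q y) : y ∈ componentAvoiding G X a ∪ X := by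
  by_cases hy : y ∈ X
  exacts [Or.inr hy, Or.inl (mem_componentAvoiding_of_adj hq hqy hy)]

lemma componentAvoiding_eq_of_mem (hb : b ∈ componentAvoiding G X a) :
    componentAvoiding G X b = componentAvoiding G X a :=
  Set.ext fun _ => ⟨mem_componentAvoiding_trans hb,
    mem_componentAvoiding_trans (mem_componentAvoiding_symm hb)⟩

lemma componentAvoiding_eq_of_mem_of_mem (ha : c ∈ componentAvoiding G X a)
    (hb : c ∈ componentAvoiding G X b) : componentAvoiding G X a = componentAvoiding G X b := by
  rw [← componentAvoiding_eq_of_mem ha, componentAvoiding_eq_of_mem hb]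

lemma mem_componentAvoiding_of_mem_support (p : G.Walk a b) (hp : ∀ z ∈ p.support, z ∉ X)
    {v : V} (hv : v ∈ p.support) : v ∈ componentAvoiding G X a := by
  classical
  exact ⟨p.takeUntil v hv, fun z hz => hp z (p.support_takeUntil_subset_support hv hz)⟩

lemma componentAvoiding_subset_of_forall_adj {P : Set V} (ha : a ∈ P)
    (hP : ∀ q ∈ P, ∀ y, G.Adj q y → y ∉ X → y ∈ P) : componentAvoiding G X a ⊆ P := by
  rintro b ⟨p, hp⟩
  induction p with
  | nil => exact ha
  | cons hadj p ih =>
    exact ih (hP _ ha _ hadj (hp _ (by simp))) fun z hz => hp z (by simp [hz])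

lemma componentAvoiding_subset_of_disjoint (h : Disjoint (componentAvoiding G T x) S) :
    componentAvoiding G T x ⊆ componentAvoiding G S x := fun _ ⟨p, hp⟩ =>
  ⟨p, fun _ hz => h.notMem_of_mem_left (mem_componentAvoiding_of_mem_support p hp hz)⟩

lemma separates_iff_notMem_componentAvoiding :
    Separates G X u w ↔ w ∉ componentAvoiding G X u := by
  simp [Separates, componentAvoiding]

end Components

section Separators

variable {G : SimpleGraph V} {S T : Set V} {u w : V}

lemma Separates.symm (h : Separates G S u w) : Separates G S w u := fun p => by
  simpa using h p.reverse

lemma IsMinUWSeparator.notMem_left (h : IsMinUWSeparator G T u w) : u ∉ T := h.2.2.1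

lemma IsMinUWSeparator.notMem_right (h : IsMinUWSeparator G T u w) : w ∉ T := h.2.2.2.1

lemma IsMinUWSeparator.notMem_componentAvoiding (h : IsMinUWSeparator G T u w) :
    w ∉ componentAvoiding G T u :=
  separates_iff_notMem_componentAvoiding.1 h.2.2.2.2.1

lemma IsMinUWSeparator.symm (h : IsMinUWSeparator G T u w) : IsMinUWSeparator G T w u :=
  let ⟨hne, hnadj, hu, hw, hsep, hmin⟩ := h
  ⟨hne.symm, fun h => hnadj h.symm, hw, hu, hsep.symm, fun S hS h => hmin S hS h.symm⟩

lemma IsMinUWSeparator.isFullComponent (h : IsMinUWSeparator G T u w) :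
    IsFullComponent G T u := by
  refine ⟨h.notMem_left, fun t ht => ?_⟩
  by_contra! hnbr
  -- a `u`-`w` walk that meets `T` only in `t` would have to enter `t` from the component of `u`
  apply h.2.2.2.2.2 (T \ {t}) (Set.sdiff_singleton_ssubset.2 ht)
  rw [separates_iff_notMem_componentAvoiding]
  refine fun hw => h.notMem_componentAvoiding
    (componentAvoiding_subset_of_forall_adj (mem_componentAvoiding_self h.notMem_left)
      (fun q hq y hqy hy => ?_) hw)
  by_cases hyt : y = t
  · exact absurd hqy.symm (hyt ▸ hnbr q hq)
  · exact mem_componentAvoiding_of_adj hq hqy fun hyT => hy ⟨hyT, hyt⟩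

lemma IsMinUWSeparator.disjoint_componentAvoiding (h : IsMinUWSeparator G T u w) :
    Disjoint (componentAvoiding G T u) (componentAvoiding G T w) :=
  Set.disjoint_left.2 fun _ hu hw =>
    h.notMem_componentAvoiding (mem_componentAvoiding_trans hu (mem_componentAvoiding_symm hw))

lemma IsMinSeparator.exists_isFullComponent_disjoint (hS : IsMinSeparator G S) (x : V) :
    ∃ z, IsFullComponent G S z ∧
      Disjoint (componentAvoiding G S z) (componentAvoiding G S x) := by
  obtain ⟨u, w, h⟩ := hS
  by_cases hu : u ∈ componentAvoiding G S x
  · refine ⟨w, h.symm.isFullComponent, ?_⟩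
    rw [← componentAvoiding_eq_of_mem hu]
    exact h.disjoint_componentAvoiding.symm
  · refine ⟨u, h.isFullComponent, Set.disjoint_left.2 fun y hyu hyx => hu ?_⟩
    rw [componentAvoiding_eq_of_mem_of_mem hyx hyu]
    exact mem_componentAvoiding_self h.notMem_left

lemma exists_isMinUWSeparator [Finite V] (hne : u ≠ w) (hnadj : ¬ G.Adj u w) :
    ∃ T, IsMinUWSeparator G T u w := by
  let P : Set V → Prop := fun T => u ∉ T ∧ w ∉ T ∧ Separates G T u w
  have hP : P {u, w}ᶜ := by
    refine ⟨by simp, by simp, fun p => ?_⟩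
    cases p with
    | nil => exact absurd rfl hne
    | cons hadj p =>
      refine ⟨_, List.mem_cons_of_mem _ p.start_mem_support, ?_⟩
      rintro (rfl | rfl)
      exacts [G.irrefl hadj, hnadj hadj]
  obtain ⟨T, -, hT, hmin⟩ := Finite.exists_le_minimal hP
  exact ⟨T, hne, hnadj, hT.1, hT.2.1, hT.2.2, fun S hST hS =>
    hST.not_subset (hmin ⟨fun hu => hT.1 (hST.subset hu), fun hw => hT.2.1 (hST.subset hw), hS⟩
      hST.subset)⟩

end Separators

section InducedPaths

variable {G : SimpleGraph V} {D : Set V} {f : ℕ → V} {n : ℕ} {s t : V}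

def IsWalkIn (G : SimpleGraph V) (D : Set V) (f : ℕ → V) (n : ℕ) : Prop :=
  (∀ i < n, G.Adj (f i) (f (i + 1))) ∧ ∀ i ≤ n, f i ∈ D

structure IsInducedPath (G : SimpleGraph V) (f : ℕ → V) (n : ℕ) : Prop where
  adj : ∀ i < n, G.Adj (f i) (f (i + 1))
  not_adj : ∀ i j, i + 1 < j → j ≤ n → ¬ G.Adj (f i) (f j)
  injOn : ∀ i j, i < j → j ≤ n → f i ≠ f j

lemma isWalkIn_getVert (p : G.Walk s t) (hp : ∀ z ∈ p.support, z ∈ D) :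
    IsWalkIn G D p.getVert p.length :=
  ⟨fun _ hi => p.adj_getVert_succ hi, fun i _ => hp _ (p.getVert_mem_support i)⟩

/-- Cutting out the stretch `f (i + 1), …, f (i + d)` of a walk. -/
lemma IsWalkIn.splice (hf : IsWalkIn G D f n) {i d : ℕ} (hd : i + d ≤ n)
    (hglue : i + d < n → G.Adj (f i) (f (i + d + 1))) (hend : i + d = n → f i = f n) :
    ∃ g, g 0 = f 0 ∧ g (n - d) = f n ∧ IsWalkIn G D g (n - d) := by
  refine ⟨fun k => if k ≤ i then f k else f (k + d), by simp, ?_, fun k hk => ?_,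
    fun k hk => ?_⟩
  · dsimp only
    split_ifs with h
    · rw [← hend (by omega), show n - d = i by omega]
    · rw [Nat.sub_add_cancel (by omega)]
  · by_cases hki : k < i
    · simpa [hki.le, Nat.succ_le_of_lt hki] using hf.1 k (by omega)
    by_cases hk' : k = i
    · subst hk'
      simpa [show k + 1 + d = k + d + 1 by omega] using hglue (by omega)
    · simpa [show ¬ k ≤ i by omega, show ¬ k + 1 ≤ i by omega,
        show k + 1 + d = k + d + 1 by omega] using hf.1 (k + d) (by omega)
  · dsimp only
    split_ifs
    exacts [hf.2 k (by omega), hf.2 (k + d) (by omega)]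

/-- A shortest walk between two distinct non-adjacent vertices is an induced path. -/
lemma IsWalkIn.exists_isInducedPath (hf : IsWalkIn G D f n) (hf0 : f 0 = s) (hfn : f n = t)
    (hst : s ≠ t) (hnadj : ¬ G.Adj s t) :
    ∃ n f, f 0 = s ∧ f n = t ∧ 2 ≤ n ∧ IsWalkIn G D f n ∧ IsInducedPath G f n := by
  classical
  have hex' : ∃ n, ∃ f, f 0 = s ∧ f n = t ∧ IsWalkIn G D f n := ⟨n, f, hf0, hfn, hf⟩
  clear hf hf0 hfn
  obtain ⟨f, hf0, hfn, hf⟩ := Nat.find_spec hex'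
  set n := Nat.find hex'
  have shorter : ∀ {i d : ℕ}, 1 ≤ d → i + d ≤ n → (i + d < n → G.Adj (f i) (f (i + d + 1))) →
      (i + d = n → f i = f n) → False := fun hd hid hglue hend => by
    obtain ⟨g, hg0, hgn, hg⟩ := hf.splice hid hglue hend
    exact Nat.find_min hex' (by omega : n - _ < n) ⟨g, hg0.trans hf0, hgn.trans hfn, hg⟩
  have hinj : ∀ i j, i < j → j ≤ n → f i ≠ f j := fun i j hij hjn hfij =>
    shorter (i := i) (d := j - i) (by omega) (by omega)
      (fun h => by simpa [hfij, show i + (j - i) = j by omega] using hf.1 j (by omega))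
      (fun h => by rwa [← show i + (j - i) = j by omega, h] at hfij)
  refine ⟨n, f, hf0, hfn, ?_, hf, hf.1, fun i j hij hjn hadj => ?_, hinj⟩
  · by_contra! hn
    interval_cases h : n
    · exact hst (hf0.symm.trans hfn)
    · exact hnadj (hf0 ▸ hfn ▸ hf.1 0 (by omega))
  · exact shorter (i := i) (d := j - i - 1) (by omega) (by omega)
      (fun _ => by rwa [show i + (j - i - 1) + 1 = j by omega]) (by omega)

end InducedPaths

section Chordal

variable {G : SimpleGraph V} {f g : ℕ → V} {a b n i j : ℕ}

lemma IsInducedPath.adj_iff (hf : IsInducedPath G f n) (hij : i < j) (hj : j ≤ n) :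
    G.Adj (f i) (f j) ↔ j = i + 1 := by
  refine ⟨fun h => ?_, fun h => h ▸ hf.adj i (by omega)⟩
  by_contra hne
  exact hf.not_adj i j (by omega) hj h

lemma cycleGraph_adj_iff_of_lt {m : ℕ} {i j : Fin m} (hij : i.val < j.val) :
    (cycleGraph m).Adj i j ↔ j.val = i.val + 1 ∨ (i.val = 0 ∧ j.val = m - 1) := by
  have hj := j.isLt
  have hji : (j - i).val = j.val - i.val := by
    rw [Fin.sub_def]
    simp only [show m - i.val + j.val = m + (j.val - i.val) by omega, Nat.add_mod_left]
    exact Nat.mod_eq_of_lt (by omega)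
  have hij' : (i - j).val = i.val + (m - j.val) := by
    rw [Fin.sub_def]
    simp only [show m - j.val + i.val = i.val + (m - j.val) by omega]
    exact Nat.mod_eq_of_lt (by omega)
  rw [cycleGraph_adj', hji, hij']
  omega

lemma nonempty_cycleGraph_embedding {m : ℕ} (c : ℕ → V)
    (hcycle : ∀ k l, k < l → l < m →
      c k ≠ c l ∧ (G.Adj (c k) (c l) ↔ l = k + 1 ∨ (k = 0 ∧ l = m - 1))) :
    Nonempty (cycleGraph m ↪g G) := by
  have key : ∀ i j : Fin m, i.val < j.val →
      c i ≠ c j ∧ (G.Adj (c i) (c j) ↔ (cycleGraph m).Adj i j) := fun i j hij => by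
    rw [cycleGraph_adj_iff_of_lt hij]
    exact hcycle i j hij j.isLt
  refine ⟨⟨⟨fun i => c i, fun i j hij => ?_⟩, fun {i j} => ?_⟩⟩
  · rcases lt_trichotomy i.val j.val with h | h | h
    exacts [absurd hij (key i j h).1, Fin.ext h, absurd hij.symm (key j i h).1]
  · show G.Adj (c i) (c j) ↔ _
    rcases lt_trichotomy i.val j.val with h | h | h
    · exact (key i j h).2
    · simp [Fin.ext h]
    · simpa only [G.adj_comm, (cycleGraph m).adj_comm] using (key j i h).2

/-- Otherwise the two paths would close up to an induced cycle of length `a + b ≥ 4`. -/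
lemma Chordal.exists_eq_or_adj_of_isInducedPath (hG : Chordal G)
    (hf : IsInducedPath G f a) (hg : IsInducedPath G g b) (ha : 2 ≤ a) (hb : 2 ≤ b)
    (h0 : f 0 = g 0) (hend : f a = g b) :
    ∃ i j, 0 < i ∧ i < a ∧ 0 < j ∧ j < b ∧ (f i = g j ∨ G.Adj (f i) (g j)) := by
  by_contra! hsep
  set m := a + b
  let c : ℕ → V := fun k => if k ≤ a then f k else g (m - k)
  have hcf : ∀ k ≤ a, c k = f k := fun k hk => if_pos hk
  have hcg : ∀ k, a < k → c k = g (m - k) := fun k hk => if_neg (by omega)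
  refine (hG m (by omega)).false (nonempty_cycleGraph_embedding (G := G) c
    fun k l hkl hlm => ?_).some
  by_cases hl : l ≤ a
  · rw [hcf k (by omega), hcf l hl, hf.adj_iff hkl hl]
    exact ⟨hf.injOn k l hkl hl, by omega⟩
  by_cases hk : a < k
  · rw [hcg k hk, hcg l (by omega), G.adj_comm, hg.adj_iff (by omega) (by omega)]
    exact ⟨(hg.injOn _ _ (by omega) (by omega)).symm, by omega⟩
  rw [hcf k (by omega), hcg l (by omega)]
  rcases Nat.eq_zero_or_pos k with rfl | hk0
  · rw [h0, hg.adj_iff (by omega) (by omega)]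
    exact ⟨hg.injOn _ _ (by omega) (by omega), by omega⟩
  rcases eq_or_lt_of_le (not_lt.1 hk) with rfl | hka
  · rw [hend, G.adj_comm, hg.adj_iff (by omega) le_rfl]
    exact ⟨(hg.injOn _ _ (by omega) le_rfl).symm, by omega⟩
  obtain ⟨hne, hnadj⟩ := hsep k (m - l) hk0 hka (by omega) (by omega)
  exact ⟨hne, iff_of_false hnadj (by omega)⟩

end Chordal

section MinSeparatorClique

variable {G : SimpleGraph V} {X T : Set V} {s t x : V}

lemma exists_isInducedPath_through_componentAvoiding (hst : s ≠ t) (hnadj : ¬ G.Adj s t)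
    (hs : ∃ y ∈ componentAvoiding G X x, G.Adj s y)
    (ht : ∃ y ∈ componentAvoiding G X x, G.Adj t y) :
    ∃ n f, f 0 = s ∧ f n = t ∧ 2 ≤ n ∧ IsInducedPath G f n ∧
      ∀ i, 0 < i → i < n → f i ∈ componentAvoiding G X x := by
  obtain ⟨ys, hys, hsys⟩ := hs
  obtain ⟨yt, hyt, htyt⟩ := ht
  obtain ⟨p, hp⟩ := mem_componentAvoiding_trans (mem_componentAvoiding_symm hys) hyt
  let q : G.Walk s t := .cons hsys (p.concat htyt.symm)
  have hq : ∀ z ∈ q.support, z ∈ insert s (insert t (componentAvoiding G X x)) := by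
    intro z hz
    simp only [q, Walk.support_cons, Walk.support_concat, List.mem_cons, List.mem_append,
      List.not_mem_nil, or_false] at hz
    rcases hz with rfl | hz | rfl
    · exact Or.inl rfl
    · exact Or.inr (Or.inr (mem_componentAvoiding_trans hys
        (mem_componentAvoiding_of_mem_support p hp hz)))
    · exact Or.inr (Or.inl rfl)
  obtain ⟨n, f, hf0, hfn, hn, hfD, hf⟩ := (isWalkIn_getVert q hq).exists_isInducedPath
    q.getVert_zero q.getVert_length hst hnadj
  refine ⟨n, f, hf0, hfn, hn, hf, fun i hi0 hin => ?_⟩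
  rcases hfD.2 i hin.le with hs | ht | hC
  · exact absurd (hf0.trans hs.symm) (hf.injOn 0 i hi0 hin.le)
  · exact absurd (ht.trans hfn.symm) (hf.injOn i n hin le_rfl)
  · exact hC

/-- Two non-adjacent vertices of a minimal `u`-`w` separator would be joined by induced paths
through the component of `u` and through that of `w`, with no edge between their interiors. -/
theorem IsMinSeparator.isClique (hG : Chordal G) (hT : IsMinSeparator G T) : G.IsClique T := by
  obtain ⟨u, w, h⟩ := hT
  intro s hs t ht hst
  by_contra hnadj
  obtain ⟨a, f, hf0, hfa, ha, hf, hfC⟩ := exists_isInducedPath_through_componentAvoiding hst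
    hnadj (h.isFullComponent.2 s hs) (h.isFullComponent.2 t ht)
  obtain ⟨b, g, hg0, hgb, hb, hg, hgC⟩ := exists_isInducedPath_through_componentAvoiding hst
    hnadj (h.symm.isFullComponent.2 s hs) (h.symm.isFullComponent.2 t ht)
  obtain ⟨i, j, hi0, hia, hj0, hjb, hij⟩ :=
    hG.exists_eq_or_adj_of_isInducedPath hf hg ha hb (hf0.trans hg0.symm) (hfa.trans hgb.symm)
  have hfi := hfC i hi0 hia
  have hgj := hgC j hj0 hjb
  refine Set.disjoint_left.1 h.disjoint_componentAvoiding ?_ hgj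
  rcases hij with heq | hadj
  · exact heq ▸ hfi
  · exact mem_componentAvoiding_of_adj hfi hadj (notMem_of_mem_componentAvoiding hgj)

end MinSeparatorClique

section SpecialVertices

variable {G : SimpleGraph V} {S T : Set V} {v x : V}

/-- The component of `G - T` containing the far side of `S` swallows `S \ T`, so any other full
component of `T` misses `S` and hence stays inside the component of `x`; it is smaller since it
misses `r`. -/
lemma IsMinSeparator.exists_isFullComponent_ssubset (hS : IsMinSeparator G S)
    (hT : IsMinSeparator G T) (hTc : G.IsClique T) {r : V} (hrT : r ∈ T)
    (hrC : r ∈ componentAvoiding G S x) :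
    ∃ e, IsFullComponent G T e ∧ componentAvoiding G T e ⊂ componentAvoiding G S x := by
  obtain ⟨z, hz, hzC⟩ := hS.exists_isFullComponent_disjoint x
  have hTCS : T ⊆ componentAvoiding G S x ∪ S := fun t ht => by
    by_cases htr : t = r
    · exact Or.inl (htr ▸ hrC)
    · exact mem_componentAvoiding_or_mem_of_adj hrC (hTc hrT ht (Ne.symm htr))
  have hZ : componentAvoiding G S z ⊆ componentAvoiding G T z :=
    componentAvoiding_subset_of_disjoint <| Set.disjoint_left.2 fun y hyz hyT =>
      (hTCS hyT).elim (Set.disjoint_left.1 hzC hyz) (notMem_of_mem_componentAvoiding hyz)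
  have hSZ : ∀ s ∈ S, s ∉ T → s ∈ componentAvoiding G T z := fun s hs hsT => by
    obtain ⟨y, hy, hsy⟩ := hz.2 s hs
    exact mem_componentAvoiding_of_adj (hZ hy) hsy.symm hsT
  obtain ⟨e, he, hez⟩ : ∃ e, IsFullComponent G T e ∧
      componentAvoiding G T e ≠ componentAvoiding G T z := by
    obtain ⟨u, w, h⟩ := hT
    have hzZ := hZ (mem_componentAvoiding_self hz.1)
    by_cases hu : componentAvoiding G T u = componentAvoiding G T z
    · refine ⟨w, h.symm.isFullComponent, fun hw => ?_⟩
      exact Set.disjoint_left.1 h.disjoint_componentAvoiding (hu ▸ hzZ) (hw ▸ hzZ)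
    · exact ⟨u, h.isFullComponent, hu⟩
  have heS : Disjoint (componentAvoiding G T e) S := Set.disjoint_left.2 fun s hse hs =>
    hez (componentAvoiding_eq_of_mem_of_mem hse
      (hSZ s hs (notMem_of_mem_componentAvoiding hse)))
  obtain ⟨e₀, he₀, hre₀⟩ := he.2 r hrT
  have he₀C : e₀ ∈ componentAvoiding G S x :=
    mem_componentAvoiding_of_adj hrC hre₀ (heS.notMem_of_mem_left he₀)
  refine ⟨e, he, ?_⟩
  rw [← componentAvoiding_eq_of_mem he₀] at heS ⊢
  rw [← componentAvoiding_eq_of_mem he₀C]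
  exact (componentAvoiding_subset_of_disjoint heS).ssubset_of_not_subset fun h =>
    notMem_of_mem_componentAvoiding (h (componentAvoiding_eq_of_mem he₀C ▸ hrC)) hrT

lemma exists_isMinSeparator_inter_nonempty [Finite V] (hSc : G.IsClique S)
    (hx : IsFullComponent G S x) (hnc : ¬ G.IsClique (componentAvoiding G S x ∪ S)) :
    ∃ T, IsMinSeparator G T ∧ (T ∩ componentAvoiding G S x).Nonempty := by
  obtain ⟨a, haC, b, hb, hab, hnadj⟩ : ∃ a ∈ componentAvoiding G S x,
      ∃ b ∈ componentAvoiding G S x ∪ S, a ≠ b ∧ ¬ G.Adj a b := by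
    simp only [isClique_iff, Set.Pairwise, not_forall] at hnc
    obtain ⟨a, ha | ha, b, hb, hab, hnadj⟩ := hnc
    · exact ⟨a, ha, b, hb, hab, hnadj⟩
    · rcases hb with hb | hb
      · exact ⟨b, hb, a, Or.inr ha, hab.symm, fun h => hnadj h.symm⟩
      · exact absurd (hSc ha hb hab) hnadj
  obtain ⟨T, hT⟩ := exists_isMinUWSeparator hab hnadj
  refine ⟨T, ⟨a, b, hT⟩, ?_⟩
  by_contra hTC
  have hCT : componentAvoiding G S x ⊆ componentAvoiding G T a := by
    rw [← componentAvoiding_eq_of_mem haC]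
    exact componentAvoiding_subset_of_disjoint <| Set.disjoint_left.2 fun y hya hyT =>
      hTC ⟨y, hyT, componentAvoiding_eq_of_mem haC ▸ hya⟩
  apply hT.notMem_componentAvoiding
  rcases hb with hb | hb
  · exact hCT hb
  · obtain ⟨d, hd, hbd⟩ := hx.2 b hb
    exact mem_componentAvoiding_of_adj (hCT hd) hbd.symm hT.notMem_right

lemma Qv_eq_of_isClique (hclq : G.IsClique (componentAvoiding G S x ∪ S))
    (hv : v ∈ componentAvoiding G S x) : Qv G v = componentAvoiding G S x ∪ S := by
  ext y
  constructor
  · rintro (rfl | hy)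
    exacts [Or.inl hv, mem_componentAvoiding_or_mem_of_adj hv hy]
  · intro hy
    by_cases hyv : y = v
    exacts [Or.inl hyv, Or.inr (hclq (Or.inl hv) hy (Ne.symm hyv))]

lemma Sv_eq_of_Qv_eq (hS : IsMinSeparator G S) (hQ : Qv G v = componentAvoiding G S x ∪ S) :
    Sv G v = S := by
  ext s
  simp only [Sv, hQ, Set.mem_ofPred_eq]
  constructor
  · rintro ⟨hs | hs, y, hy, hsy⟩
    exacts [absurd (mem_componentAvoiding_or_mem_of_adj hs hsy) hy, hs]
  · intro hs
    obtain ⟨z, hz, hzC⟩ := hS.exists_isFullComponent_disjoint x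
    obtain ⟨y, hy, hsy⟩ := hz.2 s hs
    exact ⟨Or.inr hs, y, fun hy' => hy'.elim (Set.disjoint_left.1 hzC hy)
      (notMem_of_mem_componentAvoiding hy), hsy⟩

lemma isSpecial_of_isClique (hS : Maximal (IsMinSeparator G) S)
    (hclq : G.IsClique (componentAvoiding G S x ∪ S)) (hv : v ∈ componentAvoiding G S x) :
    IsSpecial G v := by
  have hQ := Qv_eq_of_isClique hclq hv
  have hSv := Sv_eq_of_Qv_eq hS.1 hQ
  refine ⟨hclq.subset (hQ ▸ Set.subset_insert _ _), hSv ▸ hS.1, fun S' hS' hSS' => ?_⟩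
  rw [hSv] at hSS' ⊢
  exact hS.eq_of_ge hS' hSS'

theorem exists_isSpecial_mem_componentAvoiding [Finite V] (hG : Chordal G)
    (hS : Maximal (IsMinSeparator G) S) (hx : IsFullComponent G S x) :
    ∃ v ∈ componentAvoiding G S x, IsSpecial G v ∧ Qv G v ⊆ componentAvoiding G S x ∪ S := by
  generalize hC : componentAvoiding G S x = C
  induction C using WellFoundedLT.induction generalizing S x with
  | _ C ih =>
  subst hC
  have hxC := mem_componentAvoiding_self (G := G) hx.1
  by_cases hclq : G.IsClique (componentAvoiding G S x ∪ S)
  · exact ⟨x, hxC, isSpecial_of_isClique hS hclq hxC, (Qv_eq_of_isClique hclq hxC).le⟩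
  obtain ⟨T, hT, hTC⟩ := exists_isMinSeparator_inter_nonempty (hS.1.isClique hG) hx hclq
  obtain ⟨R, -, hR⟩ := Finite.exists_le_maximal
    (p := fun R => IsMinSeparator G R ∧ (R ∩ componentAvoiding G S x).Nonempty) ⟨hT, hTC⟩
  have hRmax : Maximal (IsMinSeparator G) R := ⟨hR.1.1, fun R' hR' hRR' =>
    hR.2 ⟨hR', hR.1.2.mono (Set.inter_subset_inter_left _ hRR')⟩ hRR'⟩
  obtain ⟨r, hrR, hrC⟩ := hR.1.2
  obtain ⟨e, he, heC⟩ := hS.1.exists_isFullComponent_ssubset hR.1.1 (hR.1.1.isClique hG) hrR hrC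
  obtain ⟨v, hv, hvs, hvQ⟩ := ih _ heC hRmax he rfl
  refine ⟨v, heC.subset hv, hvs, hvQ.trans (Set.union_subset
    (heC.subset.trans Set.subset_union_left) fun t ht => ?_)⟩
  obtain ⟨y, hy, hty⟩ := he.2 t ht
  exact mem_componentAvoiding_or_mem_of_adj (heC.subset hy) hty.symm

end SpecialVertices

theorem stmt5 [Fintype V] (G : SimpleGraph V) (hG : Chordal G)
    (hnc : ∃ u w : V, u ≠ w ∧ ¬ G.Adj u w) :
    ∃ v w : V, v ≠ w ∧ ¬ G.Adj v w ∧ IsSimplicial G v ∧ IsSimplicial G w ∧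
      IsSpecial G v ∧ IsSpecial G w := by
  obtain ⟨u, w, huw, hnadj⟩ := hnc
  obtain ⟨T, hT⟩ := exists_isMinUWSeparator huw hnadj
  obtain ⟨S, -, hS⟩ := Finite.exists_le_maximal (p := IsMinSeparator G) ⟨u, w, hT⟩
  obtain ⟨a, b, hab⟩ := hS.1
  obtain ⟨v, hv, hvs, hvQ⟩ :=
    exists_isSpecial_mem_componentAvoiding hG hS hab.isFullComponent
  obtain ⟨v', hv', hv's, -⟩ :=
    exists_isSpecial_mem_componentAvoiding hG hS hab.symm.isFullComponent
  have hv'Q : v' ∉ Qv G v := fun hmem => (hvQ hmem).elim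
    (Set.disjoint_left.1 hab.disjoint_componentAvoiding · hv')
    (notMem_of_mem_componentAvoiding hv')
  exact ⟨v, v', fun h => hv'Q (h ▸ Set.mem_insert _ _), fun h => hv'Q (Or.inr h),
    hvs.1, hv's.1, hvs, hv's⟩
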